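/- Let n ≥ 1 and ℓ ≥ 1. Let c : ℕ → ℝ be a sequence with every c_k ∈ ℤ[X_{n-1}] and c_{k+ℓ} = c_k for all k ≥ 0, and suppose the continued fraction [c₀, c₁, c₂, …] converges to X_n. Then the convergents satisfy p_{ℓ−1}² − X_n²·q_{ℓ−1}² = (−1)^ℓ. -/

import Mathlib

/-- `X n = 2 cos(2π/2^(n+2))`. -/
noncomputable def X (n : ℕ) : ℝ := 2 * Real.cos (2 * Real.pi / 2 ^ (n + 2))

/-- Convergent numerators: `cfNum c (k+1) = p_k`, with `cfNum c 0 = p_{-1} = 1`. -/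
noncomputable def cfNum (c : ℕ → ℝ) : ℕ → ℝ
  | 0 => 1
  | 1 => c 0
  | (k + 2) => c (k + 1) * cfNum c (k + 1) + cfNum c k

/-- Convergent denominators: `cfDen c (k+1) = q_k`, with `cfDen c 0 = q_{-1} = 0`. -/
noncomputable def cfDen (c : ℕ → ℝ) : ℕ → ℝ
  | 0 => 0
  | 1 => 1
  | (k + 2) => c (k + 1) * cfDen c (k + 1) + cfDen c k

/-- The continued fraction `[c₀, c₁, c₂, …]` converges to `x`. -/
def CFConv (c : ℕ → ℝ) (x : ℝ) : Prop :=
  Filter.Tendsto (fun k => cfNum c (k + 1) / cfDen c (k + 1)) Filter.atTop (nhds x)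

/-!
Periodicity turns the convergence `pₖ/qₖ → x` into the fixed-point relation
`x (q_{ℓ-1} x + q_{ℓ-2}) = p_{ℓ-1} x + p_{ℓ-2}`, i.e.
`(q_{ℓ-2} - p_{ℓ-1}) x + (q_{ℓ-1} x² - p_{ℓ-2}) = 0`. For `x = X_n` both coefficients lie in
`K = ℚ(X_{n-1})`, because `X_n² = 2 + X_{n-1}`, while `X_n ∉ K`: `X_n = ζ + ζ⁻¹` for a primitive
`2^{n+2}`-th root of unity `ζ`, so `[ℚ(X_n) : ℚ] ≥ 2^n`, whereas `[K : ℚ] ≤ 2^{n-1}`.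
Hence `q_{ℓ-2} = p_{ℓ-1}` and `p_{ℓ-2} = X_n² q_{ℓ-1}`, and the determinant identity
`p_{ℓ-1} q_{ℓ-2} - p_{ℓ-2} q_{ℓ-1} = (-1)^ℓ` becomes the claim.
-/

open Filter IntermediateField Module

theorem eq_zero_and_eq_zero_of_mul_add_eq_zero {F S : Type*} [Field F] [SetLike S F]
    [SubfieldClass S F] {s : S} {a b x : F} (ha : a ∈ s) (hb : b ∈ s) (hx : x ∉ s)
    (h : a * x + b = 0) : a = 0 ∧ b = 0 := by
  obtain rfl : a = 0 := by
    by_contra ha0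
    refine hx ?_
    rw [show x = -b / a by field_simp; linear_combination h]
    exact div_mem (neg_mem hb) ha
  simpa using h

section ContinuedFraction

variable (c : ℕ → ℝ)

theorem cfNum_mul_cfDen_sub_cfNum_mul_cfDen (k : ℕ) :
    cfNum c (k + 1) * cfDen c k - cfNum c k * cfDen c (k + 1) = (-1) ^ (k + 1) := by
  induction k with
  | zero => simp [cfNum, cfDen]
  | succ k ih =>
    rw [cfNum, cfDen, pow_succ]
    linear_combination -ih

theorem cfNum_mem_and_cfDen_mem {S : Type*} [SetLike S ℝ] [SubsemiringClass S ℝ] {s : S}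
    (hc : ∀ k, c k ∈ s) (k : ℕ) : cfNum c k ∈ s ∧ cfDen c k ∈ s := by
  induction k using Nat.twoStepInduction with
  | zero => simp [cfNum, cfDen]
  | one => simpa [cfNum, cfDen] using hc 0
  | more k ih₀ ih₁ =>
    exact ⟨add_mem (mul_mem (hc _) ih₁.1) ih₀.1, add_mem (mul_mem (hc _) ih₁.2) ih₀.2⟩

theorem cfNum_add_and_cfDen_add (L j : ℕ) :
    cfNum c (L + 1 + j) = cfNum c (L + 1) * cfNum (fun k => c (k + (L + 1))) j
        + cfNum c L * cfDen (fun k => c (k + (L + 1))) j ∧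
    cfDen c (L + 1 + j) = cfDen c (L + 1) * cfNum (fun k => c (k + (L + 1))) j
        + cfDen c L * cfDen (fun k => c (k + (L + 1))) j := by
  induction j using Nat.twoStepInduction with
  | zero => simp [cfNum, cfDen]
  | one => simp only [cfNum, cfDen, zero_add, ← add_assoc]; constructor <;> ring
  | more j ih₀ ih₁ =>
    rw [← add_assoc, cfNum, cfDen, cfNum, cfDen, add_assoc, ih₀.1, ih₀.2, ih₁.1, ih₁.2,
      add_comm (j + 1) (L + 1)]
    constructor <;> ring

end ContinuedFraction

theorem CFConv.mul_cfDen_add_eq_of_periodic {c : ℕ → ℝ} {x : ℝ} (hconv : CFConv c x)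
    (hx : x ≠ 0) {L : ℕ} (hper : ∀ k, c (k + (L + 1)) = c k) :
    x * (cfDen c (L + 1) * x + cfDen c L) = cfNum c (L + 1) * x + cfNum c L := by
  set r := fun k => cfNum c (k + 1) / cfDen c (k + 1)
  have hshift : (fun k => c (k + (L + 1))) = c := funext hper
  -- `p / 0 = 0` in Lean, so a nonzero limit forces the denominators to be eventually nonzero.
  have hden : ∀ᶠ k in atTop, cfDen c (k + 1) ≠ 0 :=
    (hconv.eventually_ne hx).mono fun k hk hq => hk (by simp only [hq, div_zero])
  obtain ⟨N, hN⟩ := eventually_atTop.mp hden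
  have hrec : ∀ k ≥ N, r (k + (L + 1)) * (cfDen c (L + 1) * r k + cfDen c L)
      = cfNum c (L + 1) * r k + cfNum c L := by
    intro k hk
    obtain ⟨hp, hq⟩ := hshift ▸ cfNum_add_and_cfDen_add c L (k + 1)
    have hden' := hN (k + (L + 1)) (by omega)
    simp only [r, show k + (L + 1) + 1 = L + 1 + (k + 1) by omega, hp, hq] at hden' ⊢
    rw [div_mul_eq_mul_div, div_eq_iff hden']
    field_simp [hN k hk]
  have hr : Tendsto r atTop (nhds x) := hconv
  have lhs : Tendsto (fun k => r (k + (L + 1)) * (cfDen c (L + 1) * r k + cfDen c L)) atTop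
      (nhds (x * (cfDen c (L + 1) * x + cfDen c L))) :=
    (hr.comp (tendsto_add_atTop_nat _)).mul ((hr.const_mul _).add_const _)
  exact tendsto_nhds_unique (lhs.congr' (eventually_atTop.2 ⟨N, hrec⟩))
    ((hr.const_mul _).add_const _)

theorem cfNum_sq_sub_sq_mul_cfDen_sq_of_periodic {S : Type*} [SetLike S ℝ] [SubfieldClass S ℝ]
    {s : S} {c : ℕ → ℝ} {x : ℝ} {ℓ : ℕ} (hc : ∀ k, c k ∈ s) (hx : x ∉ s) (hx2 : x ^ 2 ∈ s)
    (hper : ∀ k, c (k + ℓ) = c k) (hconv : CFConv c x) :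
    cfNum c ℓ ^ 2 - x ^ 2 * cfDen c ℓ ^ 2 = (-1) ^ ℓ := by
  cases ℓ with
  | zero => simp [cfNum, cfDen]
  | succ L =>
    have hmem := cfNum_mem_and_cfDen_mem c hc
    have hfix := hconv.mul_cfDen_add_eq_of_periodic (by rintro rfl; exact hx (zero_mem s)) hper
    obtain ⟨hnum, hden⟩ := eq_zero_and_eq_zero_of_mul_add_eq_zero
      (sub_mem (hmem L).2 (hmem (L + 1)).1)
      (sub_mem (mul_mem (hmem (L + 1)).2 hx2) (hmem L).1) hx (by linear_combination hfix)
    linear_combination cfNum_mul_cfDen_sub_cfNum_mul_cfDen c L - cfNum c (L + 1) * hnum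
      - cfDen c (L + 1) * hden

open Polynomial in
theorem natDegree_minpoly_le_two_mul {F E : Type*} [Field F] [Field E] [Algebra F E] {y z : E}
    (hy : IsIntegral F y) {a b : E} (ha : a ∈ F⟮y⟯) (hb : b ∈ F⟮y⟯) (hz : z ^ 2 + a * z + b = 0) :
    (minpoly F z).natDegree ≤ 2 * (minpoly F y).natDegree := by
  let q : F⟮y⟯[X] := Polynomial.X ^ 2 + C ⟨a, ha⟩ * Polynomial.X + C ⟨b, hb⟩
  have hq : q.Monic := by unfold q; monicity!
  have hqdeg : q.natDegree = 2 := by unfold q; compute_degree!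
  have hqz : aeval z q = 0 := by simpa [q] using hz
  have hzK : IsIntegral F⟮y⟯ z := ⟨_, hq, by rwa [← aeval_def]⟩
  have : FiniteDimensional F F⟮y⟯ := adjoin.finiteDimensional hy
  have : FiniteDimensional F⟮y⟯ F⟮y⟯⟮z⟯ := adjoin.finiteDimensional hzK
  have : FiniteDimensional F F⟮y⟯⟮z⟯ := .trans F F⟮y⟯ F⟮y⟯⟮z⟯
  have : Module.Free F⟮y⟯ F⟮y⟯⟮z⟯ := .of_divisionRing _ _
  have : IsScalarTower F F⟮y⟯⟮z⟯ E := .of_algebraMap_eq' rfl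
  have hrank : finrank F⟮y⟯ F⟮y⟯⟮z⟯ ≤ 2 := by
    rw [adjoin.finrank hzK, ← hqdeg]
    exact natDegree_le_of_dvd (minpoly.dvd _ z hqz) hq.ne_zero
  calc (minpoly F z).natDegree
      = (minpoly F (⟨z, mem_adjoin_simple_self _ z⟩ : F⟮y⟯⟮z⟯)).natDegree := by
        rw [← minpoly.algebraMap_eq (algebraMap F⟮y⟯⟮z⟯ E).injective]; rfl
    _ ≤ finrank F F⟮y⟯⟮z⟯ := minpoly.natDegree_le _
    _ = finrank F F⟮y⟯ * finrank F⟮y⟯ F⟮y⟯⟮z⟯ := (finrank_mul_finrank F F⟮y⟯ F⟮y⟯⟮z⟯).symm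
    _ ≤ (minpoly F y).natDegree * 2 := by rw [adjoin.finrank hy]; gcongr
    _ = 2 * (minpoly F y).natDegree := mul_comm _ _

theorem X_zero : X 0 = 0 := by
  unfold X
  rw [show 2 * Real.pi / 2 ^ (0 + 2) = Real.pi / 2 by ring, Real.cos_pi_div_two, mul_zero]

theorem X_succ_sq (m : ℕ) : X (m + 1) ^ 2 = 2 + X m := by
  have hangle : 2 * (2 * Real.pi / 2 ^ (m + 1 + 2)) = 2 * Real.pi / 2 ^ (m + 2) := by
    rw [show m + 1 + 2 = m + 2 + 1 by ring, pow_succ]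
    field_simp
  unfold X
  rw [mul_pow, Real.cos_sq, hangle]
  ring

theorem isIntegral_X (n : ℕ) : IsIntegral ℚ (X n) := by
  induction n with
  | zero => exact X_zero ▸ isIntegral_zero
  | succ m ih => exact .of_pow two_pos (X_succ_sq m ▸ (isIntegral_natCast 2).add ih)

theorem natDegree_minpoly_X_le (n : ℕ) : (minpoly ℚ (X n)).natDegree ≤ 2 ^ n := by
  induction n with
  | zero => simp [X_zero, minpoly.zero]
  | succ m ih =>
    have := natDegree_minpoly_le_two_mul (isIntegral_X m) (zero_mem _)
      (neg_mem (add_mem (ofNat_mem _ 2) (mem_adjoin_simple_self ℚ (X m))))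
      (z := X (m + 1)) (by rw [X_succ_sq]; ring)
    rw [pow_succ]
    omega

theorem two_pow_le_natDegree_minpoly_X (n : ℕ) : 2 ^ n ≤ (minpoly ℚ (X n)).natDegree := by
  set ζ : ℂ := Complex.exp (2 * Real.pi * Complex.I / (2 ^ (n + 2) : ℕ))
  have hζ : IsPrimitiveRoot ζ (2 ^ (n + 2)) := Complex.isPrimitiveRoot_exp _ (by positivity)
  have hX : algebraMap ℝ ℂ (X n) = ζ + ζ⁻¹ := by
    show ((X n : ℝ) : ℂ) = _
    rw [← Complex.exp_neg, X]
    push_cast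
    rw [Complex.two_cos]
    simp only [ζ]
    push_cast
    ring_nf
  have hζdeg : (minpoly ℚ ζ).natDegree = 2 ^ (n + 1) := by
    rw [← Polynomial.cyclotomic_eq_minpoly_rat hζ (by positivity), Polynomial.natDegree_cyclotomic,
      Nat.totient_prime_pow Nat.prime_two (by omega)]
    simp
  have := natDegree_minpoly_le_two_mul ((isIntegral_X n).algebraMap (B := ℂ))
    (neg_mem (mem_adjoin_simple_self ℚ _)) (one_mem _) (z := ζ)
    (by rw [hX]; field_simp [hζ.ne_zero (by positivity)]; ring)
  rw [hζdeg, minpoly.algebraMap_eq (algebraMap ℝ ℂ).injective, pow_succ] at this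
  omega

theorem X_succ_notMem_adjoin (m : ℕ) : X (m + 1) ∉ ℚ⟮X m⟯ := by
  intro h
  have : FiniteDimensional ℚ ℚ⟮X m⟯ := adjoin.finiteDimensional (isIntegral_X m)
  have hle : (minpoly ℚ (X (m + 1))).natDegree ≤ (minpoly ℚ (X m)).natDegree := by
    rw [← adjoin.finrank (isIntegral_X m)]
    have := minpoly.natDegree_le (A := ℚ) (⟨_, h⟩ : ℚ⟮X m⟯)
    rwa [← minpoly.algebraMap_eq (algebraMap ℚ⟮X m⟯ ℝ).injective] at this
  have hlower := two_pow_le_natDegree_minpoly_X (m + 1)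
  have hupper := natDegree_minpoly_X_le m
  rw [pow_succ] at hlower
  have := Nat.one_le_two_pow (n := m)
  omega

theorem stmt2_general (n ℓ : ℕ) (hn : 1 ≤ n) (c : ℕ → ℝ)
    (hc : ∀ k, c k ∈ Algebra.adjoin ℤ ({X (n - 1)} : Set ℝ))
    (hper : ∀ k, c (k + ℓ) = c k)
    (hconv : CFConv c (X n)) :
    cfNum c ℓ ^ 2 - X n ^ 2 * cfDen c ℓ ^ 2 = (-1 : ℝ) ^ ℓ := by
  obtain ⟨m, rfl⟩ : ∃ m, n = m + 1 := ⟨n - 1, by omega⟩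
  have hadj : Algebra.adjoin ℤ {X m} ≤ (ℚ⟮X m⟯.toSubalgebra).restrictScalars ℤ :=
    Algebra.adjoin_le (by simp)
  refine cfNum_sq_sub_sq_mul_cfDen_sq_of_periodic (s := ℚ⟮X m⟯) (fun k => hadj (hc k))
    (X_succ_notMem_adjoin m) ?_ hper hconv
  rw [X_succ_sq]
  exact add_mem (ofNat_mem _ 2) (mem_adjoin_simple_self ℚ (X m))

theorem stmt2 (n ℓ : ℕ) (hn : 1 ≤ n) (hℓ : 1 ≤ ℓ) (c : ℕ → ℝ)
    (hc : ∀ k, c k ∈ Algebra.adjoin ℤ ({X (n - 1)} : Set ℝ))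
    (hper : ∀ k, c (k + ℓ) = c k)
    (hconv : CFConv c (X n)) :
    cfNum c ℓ ^ 2 - X n ^ 2 * cfDen c ℓ ^ 2 = (-1 : ℝ) ^ ℓ :=
  stmt2_general n ℓ hn c hc hper hconv
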